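/- Under the hypotheses of the preceding fiber-description setup (X ⊆ I^∞ compact nonempty; (m_i) strictly increasing; ε_i, δ_i > 0 with (a) ρ(u,v) < ε_{i+1} ⟹ ρ(p_{m_i,∞}(u), p_{m_i,∞}(v)) < δ_i, (b) 5·2^{-m_i} < ε_i, (c) δ_i < 2^{1−m_i}; M_i ⊆ I^{m_i} nonempty compact with M_i ⊆ N(X, η_i), η_i → 0; h_i : M_{i+1} → M_i continuous with ρ(h_i(u), p_{m_i,∞}(u)) < δ_i/2), suppose additionally that for every x ∈ X and every i ∈ ℕ the set N̄(p_{m_i,∞}(x), 2δ_i) ∩ M_i is nonempty. Then the induced map π : lim (M_i, h_i) → X is surjective. -/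

import Mathlib

open Set Filter Topology

noncomputable section

/-- The Hilbert cube `I^∞ = ∏_{i ≥ 1} [0,1]`; the index `i : ℕ` represents coordinate `i + 1`. -/
abbrev Iinf : Type := ℕ → unitInterval

/-- The metric `ρ(x, y) = Σ_{i=1}^∞ |x_i − y_i| / 2^i` on the Hilbert cube (whose topology is
the product topology carried by `Iinf`). -/
def rho (x y : Iinf) : ℝ := ∑' i : ℕ, |((x i : ℝ)) - (y i : ℝ)| / 2 ^ (i + 1)

/-- `I^k`, identified with the subset `I^k × {0}` of `I^∞` (all coordinates beyond `k` zero). -/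
def cubeFin (k : ℕ) : Set Iinf := {x | ∀ i, k ≤ i → x i = 0}

/-- `p_{k,∞} : I^∞ → I^k`, projection to the first `k` coordinates.  For `j ≤ k` it also
serves as `p_j^k : I^k → I^j`. -/
def proj (k : ℕ) (x : Iinf) : Iinf := fun i => if i < k then x i else 0

/-- `P × I^∞_k = {x ∈ I^∞ : p_{k,∞}(x) ∈ P}`, for `P ⊆ I^k`. -/
def cyl (k : ℕ) (P : Set Iinf) : Set Iinf := {x | proj k x ∈ P}

/-- `N(A, ε)`, the open `ε`-neighborhood of `A` in `(I^∞, ρ)`. -/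
def nbhd (A : Set Iinf) (ε : ℝ) : Set Iinf := {x | ∃ a ∈ A, rho x a < ε}

/-- The interior of `P` relative to the subspace `I^m ⊆ I^∞`. -/
def relInterior (m : ℕ) (P : Set Iinf) : Set Iinf :=
  {x ∈ cubeFin m | ∃ U : Set Iinf, IsOpen U ∧ x ∈ U ∧ U ∩ cubeFin m ⊆ P}

/-!
The sets `G_i = {u ∈ M_i : ρ(u, p_{m_i} x) ≤ 2δ_i}` are nonempty by hypothesis, closed, and
mapped into each other by the bonding maps: conditions (b), (c) make `ρ(u, x) < ε_{i+1}` for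
`u ∈ G_{i+1}`, so (a) and the closeness of `h_i` to `p_{m_i}` give `h_i(u) ∈ G_i`. By
compactness the inverse system `(G_i, h_i)` has a thread, and a thread with `a_i ∈ G_i` satisfies
`ρ(a_i, x) < 5 · 2^{-m_i} → 0`, so it converges to `x`.
-/

section Rho

lemma rho_summand_le (x y : Iinf) (i : ℕ) :
    |((x i : ℝ)) - (y i : ℝ)| / 2 ^ (i + 1) ≤ 1 / 2 ^ (i + 1) := by
  gcongr
  rw [abs_le]
  constructor <;> linarith [(x i).2.1, (x i).2.2, (y i).2.1, (y i).2.2]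

lemma summable_one_div_two_pow_succ : Summable fun i : ℕ => (1 : ℝ) / 2 ^ (i + 1) :=
  (summable_geometric_two' 1).congr fun i => by ring

lemma rho_summable (x y : Iinf) :
    Summable fun i : ℕ => |((x i : ℝ)) - (y i : ℝ)| / 2 ^ (i + 1) :=
  .of_nonneg_of_le (fun _ => by positivity) (rho_summand_le x y) summable_one_div_two_pow_succ

lemma rho_nonneg (x y : Iinf) : 0 ≤ rho x y :=
  tsum_nonneg fun _ => by positivity

lemma rho_triangle (x y z : Iinf) : rho x z ≤ rho x y + rho y z := by
  unfold rho
  rw [← (rho_summable x y).tsum_add (rho_summable y z)]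
  refine (rho_summable x z).tsum_le_tsum (fun i => ?_)
    ((rho_summable x y).add (rho_summable y z))
  rw [← add_div]
  gcongr
  exact abs_sub_le _ _ _

lemma abs_sub_le_two_pow_mul_rho (x y : Iinf) (j : ℕ) :
    |((x j : ℝ)) - (y j : ℝ)| ≤ 2 ^ (j + 1) * rho x y := by
  rw [← div_le_iff₀' (by positivity)]
  exact (rho_summable x y).le_tsum j fun _ _ => by positivity

lemma rho_proj_le (k : ℕ) (x : Iinf) : rho (proj k x) x ≤ 1 / 2 ^ k := by
  have head : ∑ i ∈ Finset.range k, |((proj k x i : ℝ)) - (x i : ℝ)| / 2 ^ (i + 1) = 0 :=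
    Finset.sum_eq_zero fun i hi => by simp [proj, Finset.mem_range.mp hi]
  have tail_le : ∀ i, |((proj k x (i + k) : ℝ)) - (x (i + k) : ℝ)| / 2 ^ (i + k + 1)
      ≤ 1 / 2 ^ k / 2 / 2 ^ i := fun i =>
    (rho_summand_le _ _ _).trans_eq (by ring)
  rw [rho, ← (rho_summable _ _).sum_add_tsum_nat_add k, head, zero_add]
  calc _ ≤ ∑' i : ℕ, 1 / 2 ^ k / 2 / 2 ^ i :=
        ((rho_summable _ _).comp_injective (add_left_injective k)).tsum_le_tsum tail_le
          (summable_geometric_two' _)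
    _ = 1 / 2 ^ k := tsum_geometric_two' _

lemma rho_lt_five_div_of_rho_proj_le {u x : Iinf} {k : ℕ} {d : ℝ}
    (hu : rho u (proj k x) ≤ 2 * d) (hd : d < 2 / 2 ^ k) : rho u x < 5 / 2 ^ k := by
  have : (5 : ℝ) / 2 ^ k = 2 * (2 / 2 ^ k) + 1 / 2 ^ k := by ring
  linarith [rho_triangle u (proj k x) x, rho_proj_le k x]

lemma continuous_rho_left (c : Iinf) : Continuous fun z : Iinf => rho z c := by
  refine continuous_tsum (fun i => by fun_prop) summable_one_div_two_pow_succ fun i z => ?_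
  rw [Real.norm_of_nonneg (by positivity)]
  exact rho_summand_le z c i

lemma tendsto_of_rho_tendsto_zero {ι : Type*} {l : Filter ι} {a : ι → Iinf} {x : Iinf}
    (h : Tendsto (fun n => rho (a n) x) l (𝓝 0)) : Tendsto a l (𝓝 x) := by
  refine tendsto_pi_nhds.2 fun j => tendsto_subtype_rng.2 ?_
  rw [tendsto_iff_dist_tendsto_zero]
  exact squeeze_zero (fun _ => dist_nonneg) (fun n => abs_sub_le_two_pow_mul_rho (a n) x j)
    (by simpa using h.const_mul (2 ^ (j + 1)))

end Rho

section InverseLimit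

variable {X : ℕ → Type*} (f : ∀ i, X (i + 1) → X i) (G : ∀ i, Set (X i))

def partialThreads (N : ℕ) : Set (∀ i, X i) :=
  {a | (∀ j < N, f j (a (j + 1)) = a j) ∧ ∀ j ≤ N, a j ∈ G j}

lemma partialThreads_succ_subset (N : ℕ) : partialThreads f G (N + 1) ⊆ partialThreads f G N :=
  fun _ ha => ⟨fun j hj => ha.1 j (by omega), fun j hj => ha.2 j (by omega)⟩

lemma isClosed_partialThreads [∀ i, TopologicalSpace (X i)] [∀ i, T2Space (X i)]
    (hf : ∀ i, Continuous (f i)) (hG : ∀ i, IsClosed (G i)) (N : ℕ) :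
    IsClosed (partialThreads f G N) := by
  have : partialThreads f G N =
      (⋂ j < N, {a | f j (a (j + 1)) = a j}) ∩ ⋂ j ≤ N, {a | a j ∈ G j} := by
    ext; simp [partialThreads]
  rw [this]
  exact .inter (isClosed_biInter fun j _ => isClosed_eq (by fun_prop) (by fun_prop))
    (isClosed_biInter fun j _ => (hG j).preimage (continuous_apply j))

lemma exists_mem_partialThreads_apply_eq (hGf : ∀ i, MapsTo (f i) (G (i + 1)) (G i))
    (hGne : ∀ i, (G i).Nonempty) (N : ℕ) :
    ∀ y ∈ G N, ∃ a ∈ partialThreads f G N, a N = y := by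
  classical
  induction N with
  | zero =>
    intro y hy
    refine ⟨Function.update (fun i => (hGne i).some) 0 y, ⟨fun j hj => absurd hj (by omega),
      fun j hj => ?_⟩, by simp⟩
    obtain rfl : j = 0 := by omega
    simpa using hy
  | succ N ih =>
    intro y hy
    obtain ⟨a, ⟨ha_thread, ha_mem⟩, haN⟩ := ih (f N y) (hGf N hy)
    refine ⟨Function.update a (N + 1) y, ⟨fun j hj => ?_, fun j hj => ?_⟩, by simp⟩
    · rcases (by omega : j = N ∨ j < N) with rfl | hj
      · simp [haN]
      · simp [Function.update_of_ne (show j + 1 ≠ N + 1 by omega),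
          Function.update_of_ne (show j ≠ N + 1 by omega), ha_thread j hj]
    · rcases (by omega : j = N + 1 ∨ j ≤ N) with rfl | hj
      · simpa using hy
      · simpa [Function.update_of_ne (show j ≠ N + 1 by omega)] using ha_mem j hj

theorem exists_thread_forall_mem [∀ i, TopologicalSpace (X i)] [∀ i, CompactSpace (X i)]
    [∀ i, T2Space (X i)]
    (hf : ∀ i, Continuous (f i)) (hG : ∀ i, IsClosed (G i))
    (hGf : ∀ i, MapsTo (f i) (G (i + 1)) (G i)) (hGne : ∀ i, (G i).Nonempty) :
    ∃ a : ∀ i, X i, (∀ i, f i (a (i + 1)) = a i) ∧ ∀ i, a i ∈ G i := by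
  have hne : ∀ N, (partialThreads f G N).Nonempty := fun N =>
    let ⟨y, hy⟩ := hGne N
    let ⟨a, ha, _⟩ := exists_mem_partialThreads_apply_eq f G hGf hGne N y hy
    ⟨a, ha⟩
  have hclosed := isClosed_partialThreads f G hf hG
  obtain ⟨a, ha⟩ := IsCompact.nonempty_iInter_of_sequence_nonempty_isCompact_isClosed _
    (partialThreads_succ_subset f G) hne (hclosed 0).isCompact hclosed
  have ha : ∀ N, a ∈ partialThreads f G N := mem_iInter.1 ha
  exact ⟨a, fun i => (ha (i + 1)).1 i i.lt_succ_self, fun i => (ha i).2 i le_rfl⟩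

end InverseLimit

theorem induced_map_surjective_general
    (X : Set Iinf)
    (m : ℕ → ℕ) (hm : StrictMono m)
    (ε δ : ℕ → ℝ) (hδ : ∀ i, 0 < δ i)
    (hproj : ∀ (u v : Iinf) (i : ℕ), rho u v < ε (i + 1) →
      rho (proj (m i) u) (proj (m i) v) < δ i)
    (hε5 : ∀ i, 5 / 2 ^ m i < ε i) (hδ2 : ∀ i, δ i < 2 / 2 ^ m i)
    (M : ℕ → Set Iinf) (hMc : ∀ i, IsCompact (M i))
    (h : ∀ i, M (i + 1) → Iinf) (hhc : ∀ i, Continuous (h i))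
    (hhmem : ∀ i u, h i u ∈ M i)
    (hhclose : ∀ i (u : M (i + 1)), rho (h i u) (proj (m i) (u : Iinf)) < δ i / 2)
    (π : {a : ∀ i, M i // ∀ i, h i (a (i + 1)) = (a i : Iinf)} → Iinf)
    (hπlim : ∀ w, Tendsto (fun i => (w.1 i : Iinf)) atTop (𝓝 (π w)))
    (hball : ∀ x ∈ X, ∀ i, ∃ y ∈ M i, rho y (proj (m i) x) ≤ 2 * δ i) :
    ∀ x ∈ X, ∃ w : {a : ∀ i, M i // ∀ i, h i (a (i + 1)) = (a i : Iinf)}, π w = x := by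
  intro x hx
  have := fun i => isCompact_iff_compactSpace.mp (hMc i)
  let G : ∀ i, Set (M i) := fun i => {u | rho u (proj (m i) x) ≤ 2 * δ i}
  have hGf : ∀ i,
      MapsTo (fun u => ⟨h i u, hhmem i u⟩ : M (i + 1) → M i) (G (i + 1)) (G i) := by
    intro i u (hu : rho u (proj (m (i + 1)) x) ≤ 2 * δ (i + 1))
    have hux : rho u x < ε (i + 1) :=
      (rho_lt_five_div_of_rho_proj_le hu (hδ2 (i + 1))).trans (hε5 (i + 1))
    show rho (h i u) (proj (m i) x) ≤ 2 * δ i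
    linarith [rho_triangle (h i u) (proj (m i) u) (proj (m i) x), hhclose i u,
      hproj u x i hux, hδ i]
  obtain ⟨a, hthread, haG⟩ := exists_thread_forall_mem _ G (fun i => by fun_prop)
    (fun i => isClosed_le ((continuous_rho_left _).comp continuous_subtype_val) continuous_const)
    hGf (fun i => let ⟨y, hy, hyx⟩ := hball x hx i; ⟨⟨y, hy⟩, hyx⟩)
  refine ⟨⟨a, fun i => congrArg Subtype.val (hthread i)⟩,
    tendsto_nhds_unique (hπlim _) (tendsto_of_rho_tendsto_zero ?_)⟩
  have hclose : ∀ i, rho (a i) x ≤ 5 / 2 ^ m i := fun i =>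
    (rho_lt_five_div_of_rho_proj_le (haG i) (hδ2 i)).le
  exact squeeze_zero (fun i => rho_nonneg _ _) hclose <| tendsto_const_nhds.div_atTop <|
    (tendsto_pow_atTop_atTop_of_one_lt one_lt_two).comp hm.tendsto_atTop

/-- Lemma `altAJR`(7) / `lowerstuff`.  Under the fiber-description setup,
if moreover every closed ball `N̄(p_{m_i,∞} x, 2δ_i)` meets `M_i` (for every `x ∈ X` and
every `i`), then the induced map `π : lim (M_i, h_i) → X` is surjective. -/
theorem induced_map_surjective
    (X : Set Iinf) (hXne : X.Nonempty) (hXc : IsCompact X)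
    (m : ℕ → ℕ) (hm : StrictMono m)
    (ε δ : ℕ → ℝ) (hε : ∀ i, 0 < ε i) (hδ : ∀ i, 0 < δ i)
    (hproj : ∀ (u v : Iinf) (i : ℕ), rho u v < ε (i + 1) →
      rho (proj (m i) u) (proj (m i) v) < δ i)
    (hε5 : ∀ i, 5 / 2 ^ m i < ε i) (hδ2 : ∀ i, δ i < 2 / 2 ^ m i)
    (M : ℕ → Set Iinf) (hMne : ∀ i, (M i).Nonempty) (hMc : ∀ i, IsCompact (M i))
    (hMcube : ∀ i, M i ⊆ cubeFin (m i))
    (η : ℕ → ℝ) (hη : ∀ i, 0 < η i) (hη0 : Tendsto η atTop (𝓝 0))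
    (hMX : ∀ i, M i ⊆ nbhd X (η i))
    (h : ∀ i, M (i + 1) → Iinf) (hhc : ∀ i, Continuous (h i))
    (hhmem : ∀ i u, h i u ∈ M i)
    (hhclose : ∀ i (u : M (i + 1)), rho (h i u) (proj (m i) (u : Iinf)) < δ i / 2)
    (π : {a : ∀ i, M i // ∀ i, h i (a (i + 1)) = (a i : Iinf)} → Iinf)
    (hπlim : ∀ w, Tendsto (fun i => (w.1 i : Iinf)) atTop (𝓝 (π w)))
    (hπX : ∀ w, π w ∈ X)
    (hball : ∀ x ∈ X, ∀ i, ∃ y ∈ M i, rho y (proj (m i) x) ≤ 2 * δ i) :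
    ∀ x ∈ X, ∃ w : {a : ∀ i, M i // ∀ i, h i (a (i + 1)) = (a i : Iinf)}, π w = x :=
  induced_map_surjective_general X m hm ε δ hδ hproj hε5 hδ2 M hMc h hhc hhmem hhclose π hπlim hball
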